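/- Let G be a finite simple graph of order n and size m with minimum degree δ and degree sequence d₁ ≤ d₂ ≤ ⋯ ≤ d_n, and let 1 ≤ k ≤ n be a positive integer. Then γ^NN_{ks}(G) ≥ (nδ − 4m − n + 2 ∑_{i=1}^{k} ⌈(d_i + 1)/2⌉)/(δ + 1). -/

import Mathlib

open Finset

/-- The closed neighborhood of `v` in `G`, as a `Finset`. -/
def closedNbr {V : Type*} [Fintype V] [DecidableEq V] (G : SimpleGraph V) [DecidableRel G.Adj]
    (v : V) : Finset V := insert v (G.neighborFinset v)

/-- `f` is a nonnegative signed `k`-subdominating function of `G`: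
`f : V → {-1, 1}` and `∑_{u ∈ N[v]} f(u) ≥ 0` for at least `k` vertices `v`. -/
def IsNNSkSDF {V : Type*} [Fintype V] [DecidableEq V] (G : SimpleGraph V) [DecidableRel G.Adj]
    (k : ℕ) (f : V → ℤ) : Prop :=
  (∀ v, f v = 1 ∨ f v = -1) ∧
    k ≤ (univ.filter fun v => 0 ≤ ∑ u ∈ closedNbr G v, f u).card

/-- The nonnegative signed `k`-subdomination number `γ^NN_{ks}(G)`. -/
noncomputable def gammaNNks {V : Type*} [Fintype V] [DecidableEq V] (G : SimpleGraph V)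
    [DecidableRel G.Adj] (k : ℕ) : ℤ :=
  sInf {w : ℤ | ∃ f : V → ℤ, IsNNSkSDF G k f ∧ w = ∑ v, f v}

/-!
Take a minimum-weight NNSkSDF `f`, let `P = {f = 1}` and let `A` be the set of at least `k`
vertices `v` with `f(N[v]) ≥ 0`. Each `v ∈ A` has at least `⌈(d(v) + 1)/2⌉` vertices of `P` in
`N[v]`. Since the `dᵢ` are sorted and `|A| ≥ k`, double counting the pairs `(v, u)` with `v ∈ A`,
`u ∈ P ∩ N[v]` gives `∑_{i ≤ k} ⌈(dᵢ + 1)/2⌉ ≤ ∑_{v ∈ A} ⌈(d(v) + 1)/2⌉ ≤ ∑_{u ∈ P} (d(u) + 1)`.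
The right-hand side is `2m + n - ∑_{u ∉ P} (d(u) + 1) ≤ 2m + n - (n - |P|)(δ + 1)`, and
`|P| = (n + γ)/2`; rearranging gives the bound.
-/
theorem Multiset.exists_le_map_eq_of_le_map {α β : Type*} {f : α → β} {s : Multiset β}
    {t : Multiset α} (h : s ≤ t.map f) : ∃ u ≤ t, u.map f = s := by
  induction s using Quotient.inductionOn
  induction t using Quotient.inductionOn
  obtain ⟨w, hw, hsub⟩ := Multiset.coe_le.mp h
  obtain ⟨u, hu, rfl⟩ := List.sublist_map_iff.mp hsub
  exact ⟨u, Multiset.coe_le.mpr hu.subperm, Multiset.coe_eq_coe.mpr hw⟩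

namespace Finset

variable {M : Type*} [AddCommMonoid M] [PartialOrder M] [IsOrderedAddMonoid M]
  [CanonicallyOrderedAdd M]

theorem sum_range_le_sum_of_monotoneOn {d : ℕ → M} {n k : ℕ} (hd : MonotoneOn d (Set.Iio n))
    {T : Finset ℕ} (hT : T ⊆ range n) (hk : k ≤ #T) :
    ∑ i ∈ range k, d i ≤ ∑ i ∈ T, d i := by
  induction T using Finset.induction_on_max generalizing k with
  | empty =>
    obtain rfl : k = 0 := by simpa using hk
    simp
  | insert a s hlt ih =>
    have has : a ∉ s := fun h => lt_irrefl a (hlt a h)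
    have ha : a < n := mem_range.mp (hT (mem_insert_self a s))
    have ih' := fun {k} => ih (k := k) ((subset_insert a s).trans hT)
    rw [sum_insert has]
    rcases le_or_gt k #s with hks | hks
    · exact (ih' hks).trans le_add_self
    · rw [card_insert_of_notMem has] at hk
      obtain rfl : k = #s + 1 := by omega
      have hsa : #s ≤ a := by
        simpa using card_le_card (fun x hx => mem_range.mpr (hlt x hx) : s ⊆ range a)
      rw [sum_range_succ, add_comm]
      exact add_le_add (hd (Set.mem_Iio.mpr (hsa.trans_lt ha)) (Set.mem_Iio.mpr ha) hsa)
        (ih' le_rfl)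

theorem sum_range_le_sum_of_map_val_eq {ι : Type*} {x : ι → M} {d : ℕ → M} {n k : ℕ}
    {s : Finset ι} (hd : MonotoneOn d (Set.Iio n)) (hx : s.val.map x = (range n).val.map d)
    {S : Finset ι} (hS : S ⊆ s) (hk : k ≤ #S) :
    ∑ i ∈ range k, d i ≤ ∑ v ∈ S, x v := by
  obtain ⟨u, hu, hux⟩ := Multiset.exists_le_map_eq_of_le_map
    (hx ▸ Multiset.map_le_map (val_le_iff.mpr hS) : S.val.map x ≤ (range n).val.map d)
  let T : Finset ℕ := ⟨u, Multiset.nodup_of_le hu (range n).nodup⟩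
  have hST : ∑ v ∈ S, x v = ∑ i ∈ T, d i := congrArg Multiset.sum hux.symm
  have hcard : Multiset.card u = #S := by simpa using congrArg Multiset.card hux
  rw [hST]
  exact sum_range_le_sum_of_monotoneOn hd (val_le_iff.mp hu) (hk.trans_eq hcard.symm)

theorem sum_eq_two_mul_card_filter_sub_card {α : Type*} {s : Finset α} {f : α → ℤ}
    (hf : ∀ a ∈ s, f a = 1 ∨ f a = -1) :
    ∑ a ∈ s, f a = 2 * #(s.filter (f · = 1)) - #s := by
  calc ∑ a ∈ s, f a = ∑ a ∈ s, (2 * (if f a = 1 then 1 else 0) - 1) := by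
        refine sum_congr rfl fun a ha => ?_
        rcases hf a ha with h | h <;> simp [h]
    _ = _ := by rw [sum_sub_distrib, ← mul_sum, sum_boole]; simp

end Finset

theorem Int.ceil_natCast_add_one_div_two (x : ℕ) : ⌈((x : ℚ) + 1) / 2⌉ = ((x + 2) / 2 : ℕ) := by
  have h := Rat.ceil_natCast_div_natCast (x + 1) 2
  push_cast at h
  rw [h]
  omega

section

variable {V : Type*} [Fintype V] [DecidableEq V] (G : SimpleGraph V) [DecidableRel G.Adj]

theorem card_closedNbr (v : V) : #(closedNbr G v) = G.degree v + 1 :=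
  card_insert_of_notMem (G.notMem_neighborFinset_self v)

theorem mem_closedNbr_comm {u v : V} : u ∈ closedNbr G v ↔ v ∈ closedNbr G u := by
  simp only [closedNbr, mem_insert, SimpleGraph.mem_neighborFinset, G.adj_comm, eq_comm]

theorem sum_card_inter_closedNbr_le (A P : Finset V) :
    ∑ v ∈ A, #(P ∩ closedNbr G v) ≤ ∑ u ∈ P, #(closedNbr G u) := by
  have h := sum_card_bipartiteAbove_eq_sum_card_bipartiteBelow (s := A) (t := P)
    (r := fun v u => u ∈ closedNbr G v)
  simp only [bipartiteAbove, bipartiteBelow, filter_mem_eq_inter] at h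
  rw [h]
  exact sum_le_sum fun u _ =>
    card_le_card fun v hv => (mem_closedNbr_comm G).mp (mem_filter.mp hv).2

theorem sum_degree_add_one_add_card_compl_mul_le (P : Finset V) :
    ∑ u ∈ P, (G.degree u + 1) + #Pᶜ * (G.minDegree + 1) ≤ 2 * #G.edgeFinset + Fintype.card V := by
  have hmin : #Pᶜ * (G.minDegree + 1) ≤ ∑ u ∈ Pᶜ, (G.degree u + 1) := by
    simpa using card_nsmul_le_sum Pᶜ _ _ fun u _ => Nat.succ_le_succ (G.minDegree_le_degree u)
  calc _ ≤ ∑ u ∈ P, (G.degree u + 1) + ∑ u ∈ Pᶜ, (G.degree u + 1) := by gcongr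
    _ = _ := by
      rw [sum_add_sum_compl, sum_add_distrib, G.sum_degrees_eq_twice_card_edges]
      simp

theorem half_degree_le_card_inter_closedNbr {f : V → ℤ} (hf : ∀ v, f v = 1 ∨ f v = -1) {v : V}
    (hv : 0 ≤ ∑ u ∈ closedNbr G v, f u) :
    (G.degree v + 2) / 2 ≤ #(({u | f u = 1} : Finset V) ∩ closedNbr G v) := by
  rw [sum_eq_two_mul_card_filter_sub_card fun u _ => hf u, card_closedNbr] at hv
  have : ({u | f u = 1} : Finset V) ∩ closedNbr G v = (closedNbr G v).filter (f · = 1) := by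
    ext
    simp [and_comm]
  rw [this]
  omega

theorem card_mul_minDegree_add_two_mul_sum_half_degree_le {f : V → ℤ}
    (hf : ∀ v, f v = 1 ∨ f v = -1) {A : Finset V} (hA : ∀ v ∈ A, 0 ≤ ∑ u ∈ closedNbr G v, f u) :
    (Fintype.card V * G.minDegree : ℤ) + 2 * ((∑ v ∈ A, (G.degree v + 2) / 2 : ℕ) : ℤ)
      ≤ (G.minDegree + 1) * ∑ v, f v + 4 * #G.edgeFinset + Fintype.card V := by
  set P : Finset V := {u | f u = 1}
  have hA_P : ∑ v ∈ A, (G.degree v + 2) / 2 ≤ ∑ u ∈ P, (G.degree u + 1) :=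
    calc _ ≤ ∑ v ∈ A, #(P ∩ closedNbr G v) :=
          sum_le_sum fun v hv => half_degree_le_card_inter_closedNbr G hf (hA v hv)
      _ ≤ ∑ u ∈ P, #(closedNbr G u) := sum_card_inter_closedNbr_le G A P
      _ = ∑ u ∈ P, (G.degree u + 1) := sum_congr rfl fun u _ => card_closedNbr G u
  have hP := sum_degree_add_one_add_card_compl_mul_le G P
  have hweight : ∑ v, f v = 2 * #P - Fintype.card V :=
    sum_eq_two_mul_card_filter_sub_card fun v _ => hf v
  rw [← card_add_card_compl P] at hP hweight ⊢
  rw [hweight]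
  have hA_P' := Nat.cast_le (α := ℤ) |>.mpr hA_P
  have hP' := Nat.cast_le (α := ℤ) |>.mpr hP
  push_cast at hA_P' hP' ⊢
  linarith

theorem exists_isNNSkSDF_sum_eq_gammaNNks {k : ℕ} (hk : k ≤ Fintype.card V) :
    ∃ f, IsNNSkSDF G k f ∧ ∑ v, f v = gammaNNks G k := by
  have hne : {w | ∃ f, IsNNSkSDF G k f ∧ w = ∑ v, f v}.Nonempty :=
    ⟨_, fun _ => 1, ⟨fun _ => Or.inl rfl, by simpa [filter_true_of_mem] using hk⟩, rfl⟩
  have hbdd : BddBelow {w | ∃ f, IsNNSkSDF G k f ∧ w = ∑ v, f v} := by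
    refine ⟨-Fintype.card V, ?_⟩
    rintro _ ⟨f, ⟨hf, -⟩, rfl⟩
    rw [sum_eq_two_mul_card_filter_sub_card fun v _ => hf v, card_univ]
    omega
  obtain ⟨f, hf, h⟩ := Int.csInf_mem hne hbdd
  exact ⟨f, hf, h.symm⟩

end

theorem gammaNNks_lower_bound_2_general {V : Type*} [Fintype V] [DecidableEq V]
    (G : SimpleGraph V) [DecidableRel G.Adj]
    (n m k δ : ℕ) (hn : n = Fintype.card V) (hm : m = G.edgeFinset.card)
    (hδ : δ = G.minDegree) (hk2 : k ≤ n)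
    (d : ℕ → ℕ) (hmono : ∀ i j, i ≤ j → j < n → d i ≤ d j)
    (hseq : (univ : Finset V).val.map (fun v => G.degree v) = (Finset.range n).val.map d) :
    ((n : ℝ) * δ - 4 * (m : ℝ) - n + 2 * ∑ i ∈ Finset.range k, (⌈((d i : ℚ) + 1) / 2⌉ : ℝ))
        / ((δ : ℝ) + 1)
      ≤ (gammaNNks G k : ℝ) := by
  obtain ⟨f, hf, hγ⟩ := exists_isNNSkSDF_sum_eq_gammaNNks G (hn ▸ hk2)
  set A : Finset V := {v | 0 ≤ ∑ u ∈ closedNbr G v, f u}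
  have hsmallest : ∑ i ∈ range k, (d i + 2) / 2 ≤ ∑ v ∈ A, (G.degree v + 2) / 2 :=
    sum_range_le_sum_of_map_val_eq (d := fun i => (d i + 2) / 2)
      (fun i _ j hj hij => Nat.div_le_div_right (Nat.add_le_add_right (hmono i j hij hj) 2))
      (by simpa only [Multiset.map_map, Function.comp_def] using
        congrArg (Multiset.map fun x => (x + 2) / 2) hseq) (subset_univ A) hf.2
  have hbound := card_mul_minDegree_add_two_mul_sum_half_degree_le G hf.1
    (A := A) fun v hv => (mem_filter.mp hv).2
  have hγ_bound : (n * δ : ℤ) - 4 * m - n + 2 * ((∑ i ∈ range k, (d i + 2) / 2 : ℕ) : ℤ)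
      ≤ gammaNNks G k * (δ + 1) := by
    subst hn hm hδ
    rw [← hγ]
    have hsmallest' := Nat.cast_le (α := ℤ) |>.mpr hsmallest
    linarith
  have hceil : ∑ i ∈ range k, (⌈((d i : ℚ) + 1) / 2⌉ : ℝ)
      = ((∑ i ∈ range k, (d i + 2) / 2 : ℕ) : ℝ) := by
    simp only [Nat.cast_sum, Int.ceil_natCast_add_one_div_two, Int.cast_natCast]
  -- hide the sum so that the casts below are not pushed into the truncated division
  generalize ∑ i ∈ range k, (d i + 2) / 2 = S at hceil hγ_bound
  rw [div_le_iff₀ (by positivity), hceil]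
  exact_mod_cast hγ_bound

/-- For a finite simple graph `G` of order `n` and size `m`, with minimum
degree `δ`, degree sequence `d 0 ≤ d 1 ≤ ⋯ ≤ d (n-1)` and `1 ≤ k ≤ n`,
`γ^NN_{ks}(G) ≥ (nδ - 4m - n + 2 ∑_{i<k} ⌈(d i + 1)/2⌉)/(δ + 1)`. -/
theorem gammaNNks_lower_bound_2 {V : Type*} [Fintype V] [DecidableEq V]
    (G : SimpleGraph V) [DecidableRel G.Adj]
    (n m k δ : ℕ) (hn : n = Fintype.card V) (hm : m = G.edgeFinset.card)
    (hδ : δ = G.minDegree) (hk1 : 1 ≤ k) (hk2 : k ≤ n)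
    (d : ℕ → ℕ) (hmono : ∀ i j, i ≤ j → j < n → d i ≤ d j)
    (hseq : (univ : Finset V).val.map (fun v => G.degree v) = (Finset.range n).val.map d) :
    ((n : ℝ) * δ - 4 * (m : ℝ) - n + 2 * ∑ i ∈ Finset.range k, (⌈((d i : ℚ) + 1) / 2⌉ : ℝ))
        / ((δ : ℝ) + 1)
      ≤ (gammaNNks G k : ℝ) :=
  gammaNNks_lower_bound_2_general G n m k δ hn hm hδ hk2 d hmono hseq
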